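/- arXiv:1502.05753 — 4 statements merged into one kernel-verified Lean document; each statement's English description precedes it below -/
import Mathlib

section
/- Let A and B be disjoint sets, ξ, ζ ordinals. Suppose T₀ is a B-tree on A of order ζ, and for each maximal element t of T₀, T_t is a B-tree on B of order ξ. Then T = T₀ ∪ {t⌢s : t ∈ MAX(T₀), s ∈ T_t} is a B-tree on A ∪ B of order ξ + ζ. -/
/-!
Up to stage `ξ` the derivation only erodes the grafted trees: every node of `T₀` still
lies below a surviving node `t ++ v`, and since `A` and `B` are disjoint a node of the
graft splits uniquely as `t ++ v`. Hence `d^η T = T₀ ∪ {t ++ v : v ∈ d^η T_t}` for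
`η ≤ ξ`; in particular `d^ξ T = T₀`, and then `d^(ξ + η) T = d^η T₀`.
-/

open Ordinal

/-- `s` is a proper initial segment of `t`. -/
def ProperPrefix {S : Type*} (s t : List S) : Prop := s <+: t ∧ s ≠ t

/-- The maximal elements of a set of finite sequences with respect to the
proper-initial-segment order. -/
def maxElems {S : Type*} (T : Set (List S)) : Set (List S) :=
  {t ∈ T | ¬ ∃ u ∈ T, ProperPrefix t u}

/-- The derived tree: remove the maximal elements. -/
def derivTree {S : Type*} (T : Set (List S)) : Set (List S) :=
  {t ∈ T | ∃ u ∈ T, ProperPrefix t u}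

/-- Transfinite iterates of the derivation: `d^0 T = T`, `d^(ξ+1) T = (d^ξ T)'`,
and intersections at limit stages. -/
noncomputable def derivIter {S : Type*} (T : Set (List S)) (ξ : Ordinal) : Set (List S) :=
  Ordinal.limitRecOn ξ T (fun _ ih => derivTree ih)
    (fun o _ ih => ⋂ (ζ : Set.Iio o), ih ζ.1 ζ.2)

/-- A tree on `S`: a set of finite sequences closed under initial segments. -/
def IsTree {S : Type*} (T : Set (List S)) : Prop :=
  ∀ ⦃s t : List S⦄, s <+: t → t ∈ T → s ∈ T

/-- A `B`-tree on `S`: a set of nonempty finite sequences which becomes a tree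
after adjoining the empty sequence. -/
def IsBTree {S : Type*} (T : Set (List S)) : Prop :=
  [] ∉ T ∧ ∀ ⦃s t : List S⦄, s ≠ [] → s <+: t → t ∈ T → s ∈ T

/-- `T` has order exactly `ξ`: `ξ` is the least ordinal whose derived tree is empty. -/
def hasOrder {S : Type*} (T : Set (List S)) (ξ : Ordinal) : Prop :=
  derivIter T ξ = ∅ ∧ ∀ ζ < ξ, derivIter T ζ ≠ ∅

section TreeOrder

variable {S : Type*}

section Derivation

variable (T : Set (List S))

@[simp] lemma derivIter_zero : derivIter T 0 = T :=
  Ordinal.limitRecOn_zero _ _ _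

@[simp] lemma derivIter_add_one (η : Ordinal) :
    derivIter T (η + 1) = derivTree (derivIter T η) :=
  Ordinal.limitRecOn_add_one _ _ _ _

lemma derivIter_limit {η : Ordinal} (h : Order.IsSuccLimit η) :
    derivIter T η = ⋂ d : Set.Iio η, derivIter T d :=
  Ordinal.limitRecOn_limit _ _ _ _ h

lemma derivTree_subset : derivTree T ⊆ T := fun _ ht => ht.1

variable {T}

lemma derivTree_mono {T' : Set (List S)} (h : T ⊆ T') : derivTree T ⊆ derivTree T' :=
  fun _ ⟨hs, u, hu, hsu⟩ => ⟨h hs, u, h hu, hsu⟩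

variable (T)

lemma derivIter_antitone : Antitone (derivIter T) := by
  intro a b hab
  induction b using Ordinal.limitRecOn generalizing a with
  | zero => rw [nonpos_iff_eq_zero.mp hab]
  | add_one c ih =>
    rcases Order.le_succ_iff_eq_or_le.mp (Order.succ_eq_add_one c ▸ hab) with rfl | hac
    · rfl
    · rw [derivIter_add_one]
      exact (derivTree_subset _).trans (ih hac)
  | limit b hb _ =>
    rcases hab.eq_or_lt with rfl | hab
    · rfl
    · rw [derivIter_limit T hb]
      exact Set.iInter_subset (fun d : Set.Iio b => derivIter T d) ⟨a, hab⟩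

lemma derivIter_subset (η : Ordinal) : derivIter T η ⊆ T := by
  simpa using derivIter_antitone T (zero_le (a := η))

lemma derivIter_add (a b : Ordinal) : derivIter T (a + b) = derivIter (derivIter T a) b := by
  induction b using Ordinal.limitRecOn with
  | zero => simp
  | add_one c ih => rw [← add_assoc, derivIter_add_one, derivIter_add_one, ih]
  | limit b hb ih =>
    rw [derivIter_limit _ (Ordinal.isSuccLimit_add a hb), derivIter_limit _ hb]
    refine subset_antisymm ?_ ?_
    · refine Set.subset_iInter fun d => ?_
      rw [← ih d d.2]
      exact Set.iInter_subset_of_subset ⟨a + d, add_lt_add_right d.2 a⟩ subset_rfl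
    · refine Set.subset_iInter fun d => ?_
      obtain ⟨e, he, hde⟩ := (Ordinal.lt_add_iff hb.ne_bot).mp d.2
      refine Set.iInter_subset_of_subset ⟨e, he⟩ ?_
      rw [← ih e he]
      exact derivIter_antitone T hde

lemma subset_derivIter {U : Set (List S)} (hUT : U ⊆ T) (hU : U ⊆ derivTree U)
    (η : Ordinal) : U ⊆ derivIter T η := by
  induction η using Ordinal.limitRecOn with
  | zero => simpa using hUT
  | add_one c ih => simpa using hU.trans (derivTree_mono ih)
  | limit b hb ih =>
    rw [derivIter_limit T hb]
    exact Set.subset_iInter fun d => ih d d.2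

variable {T}

lemma exists_prefix_mem_maxElems {ζ : Ordinal} (h : derivIter T ζ = ∅) {s : List S}
    (hs : s ∈ T) : ∃ t ∈ maxElems T, s <+: t := by
  by_contra! hno
  set U := {u ∈ T | s <+: u}
  have hU : U ⊆ derivTree U := by
    intro u hu
    obtain ⟨w, hw, huw⟩ : ∃ w ∈ T, ProperPrefix u w := by
      by_contra hmax
      exact hno u ⟨hu.1, hmax⟩ hu.2
    exact ⟨hu, w, ⟨hw, hu.2.trans huw.1⟩, huw⟩
  simpa [h] using subset_derivIter T (fun _ hu => hu.1) hU ζ ⟨hs, List.prefix_refl s⟩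

lemma hasOrder_add {T' : Set (List S)} {ξ ζ : Ordinal} (hT : derivIter T ξ = T')
    (hT' : hasOrder T' ζ) (hζ : ζ ≠ 0) : hasOrder T (ξ + ζ) := by
  refine ⟨by rw [derivIter_add, hT, hT'.1], fun η hη => ?_⟩
  rcases lt_or_ge η ξ with hηξ | hξη
  · have hT'ne : T' ≠ ∅ := by simpa using hT'.2 0 (pos_iff_ne_zero.mpr hζ)
    exact fun hη' => hT'ne (Set.subset_empty_iff.mp (hη' ▸ hT ▸ derivIter_antitone T hηξ.le))
  · obtain ⟨δ, rfl⟩ := exists_add_of_le hξη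
    rw [derivIter_add, hT]
    exact hT'.2 δ (by simpa using hη)

end Derivation

lemma List.prefix_of_prefix_append_cons {s t v : List S} {b : S} (h : s <+: t ++ b :: v)
    (hb : b ∉ s) : s <+: t := by
  rcases List.prefix_or_prefix_of_prefix h (List.prefix_append t _) with hst | ⟨r, rfl⟩
  · exact hst
  · cases r with
    | nil => simp
    | cons c r =>
      obtain ⟨rfl, -⟩ := List.cons_prefix_cons.mp ((List.prefix_append_right_inj t).mp h)
      simp at hb

def wordsOver (A : Set S) : Set (List S) := {l | ∀ x ∈ l, x ∈ A}

section Graft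

variable {A B : Set S}

lemma notMem_of_mem_wordsOver (hAB : Disjoint A B) {t : List S} (ht : t ∈ wordsOver A)
    {b : S} (hb : b ∈ B) : b ∉ t :=
  fun hbt => Set.disjoint_left.mp hAB (ht b hbt) hb

lemma eq_and_prefix_of_append_prefix_append (hAB : Disjoint A B) {t₁ t₂ v₁ v₂ : List S}
    (ht₁ : t₁ ∈ wordsOver A) (ht₂ : t₂ ∈ wordsOver A) (hv₁ : v₁ ∈ wordsOver B)
    (hv₂ : v₂ ∈ wordsOver B) (hv₁ne : v₁ ≠ []) (hv₂ne : v₂ ≠ [])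
    (h : t₁ ++ v₁ <+: t₂ ++ v₂) : t₁ = t₂ ∧ v₁ <+: v₂ := by
  obtain ⟨b₁, v₁, rfl⟩ := List.exists_cons_of_ne_nil hv₁ne
  obtain ⟨b₂, v₂, rfl⟩ := List.exists_cons_of_ne_nil hv₂ne
  have hb₁ : b₁ ∉ t₂ := notMem_of_mem_wordsOver hAB ht₂ (hv₁ b₁ (by simp))
  have h₁₂ : t₁ <+: t₂ := List.prefix_of_prefix_append_cons ((List.prefix_append _ _).trans h)
    (notMem_of_mem_wordsOver hAB ht₁ (hv₂ b₂ (by simp)))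
  have h₂₁ : t₂ <+: t₁ := by
    rcases List.prefix_or_prefix_of_prefix (List.prefix_append t₂ _) h with h' | h'
    · exact List.prefix_of_prefix_append_cons h' hb₁
    · exact absurd (h'.subset (by simp)) hb₁
  obtain rfl := h₁₂.eq_of_length (le_antisymm h₁₂.length_le h₂₁.length_le)
  exact ⟨rfl, (List.prefix_append_right_inj t₁).mp h⟩

def graft (T₀ : Set (List S)) (D : List S → Set (List S)) : Set (List S) :=
  {u | ∃ t ∈ maxElems T₀, ∃ v ∈ D t, u = t ++ v}

variable {T₀ : Set (List S)} {D : List S → Set (List S)}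

lemma IsBTree.union_graft (hT₀ : IsBTree T₀) (hD : ∀ t ∈ maxElems T₀, IsBTree (D t)) :
    IsBTree (T₀ ∪ graft T₀ D) := by
  refine ⟨?_, ?_⟩
  · rintro (h | ⟨t, ht, v, -, htv⟩)
    · exact hT₀.1 h
    · obtain ⟨rfl, rfl⟩ := List.append_eq_nil_iff.mp htv.symm
      exact hT₀.1 ht.1
  · rintro s u hs hsu (hu | ⟨t, ht, v, hv, rfl⟩)
    · exact .inl (hT₀.2 hs hsu hu)
    · rcases List.prefix_or_prefix_of_prefix hsu (List.prefix_append t v) with hst | ⟨w, rfl⟩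
      · exact .inl (hT₀.2 hs hst ht.1)
      · rcases eq_or_ne w [] with rfl | hw
        · simpa using .inl ht.1
        · exact .inr ⟨t, ht, w, (hD t ht).2 hw ((List.prefix_append_right_inj t).mp hsu) hv, rfl⟩

lemma union_graft_subset_wordsOver (hT₀ : T₀ ⊆ wordsOver A)
    (hD : ∀ t ∈ maxElems T₀, D t ⊆ wordsOver B) : T₀ ∪ graft T₀ D ⊆ wordsOver (A ∪ B) := by
  rintro u (hu | ⟨t, ht, v, hv, rfl⟩) x hx
  · exact .inl (hT₀ hu x hx)
  · rcases List.mem_append.mp hx with hx | hx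
    · exact .inl (hT₀ ht.1 x hx)
    · exact .inr (hD t ht hv x hx)

lemma derivTree_union_graft (hAB : Disjoint A B) (hT₀ : T₀ ⊆ wordsOver A)
    (hT₀max : ∀ s ∈ T₀, ∃ t ∈ maxElems T₀, s <+: t)
    (hDB : ∀ t ∈ maxElems T₀, D t ⊆ wordsOver B) (hDnil : ∀ t ∈ maxElems T₀, [] ∉ D t)
    (hDne : ∀ t ∈ maxElems T₀, (D t).Nonempty) :
    derivTree (T₀ ∪ graft T₀ D) = T₀ ∪ graft T₀ (fun t => derivTree (D t)) := by
  have hne {t v} (ht : t ∈ maxElems T₀) (hv : v ∈ D t) : v ≠ [] := fun h => hDnil t ht (h ▸ hv)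
  ext s
  constructor
  · rintro ⟨hs | ⟨t, ht, v, hv, rfl⟩, u, hu, hsu⟩
    · exact .inl hs
    rcases hu with hu | ⟨t', ht', w, hw, rfl⟩
    · -- the first letter of `v` lies in `B`, but `u` is a word over `A`
      obtain ⟨b, v', rfl⟩ := List.exists_cons_of_ne_nil (hne ht hv)
      exact absurd (hsu.1.subset (by simp))
        (notMem_of_mem_wordsOver hAB (hT₀ hu) (hDB t ht hv b (by simp)))
    · obtain ⟨rfl, hvw⟩ := eq_and_prefix_of_append_prefix_append hAB (hT₀ ht.1) (hT₀ ht'.1)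
        (hDB t ht hv) (hDB t' ht' hw) (hne ht hv) (hne ht' hw) hsu.1
      exact .inr ⟨t, ht, v, ⟨hv, w, hw, hvw, fun h => hsu.2 (by rw [h])⟩, rfl⟩
  · rintro (hs | ⟨t, ht, v, ⟨hv, w, hw, hvw⟩, rfl⟩)
    · obtain ⟨t, ht, hst⟩ := hT₀max s hs
      obtain ⟨v, hv⟩ := hDne t ht
      refine ⟨.inl hs, t ++ v, .inr ⟨t, ht, v, hv, rfl⟩, hst.trans (List.prefix_append t v),
        fun h => hne ht hv ?_⟩
      have : t ++ v <+: t ++ [] := by simpa [h] using hst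
      exact List.prefix_nil.mp ((List.prefix_append_right_inj t).mp this)
    · exact ⟨.inr ⟨t, ht, v, hv, rfl⟩, t ++ w, .inr ⟨t, ht, w, hw, rfl⟩,
        (List.prefix_append_right_inj t).mpr hvw.1, fun h => hvw.2 (List.append_cancel_left h)⟩

lemma graft_iInter (hAB : Disjoint A B) (hT₀ : T₀ ⊆ wordsOver A) {ι : Type*} [Nonempty ι]
    {D : ι → List S → Set (List S)}
    (hDB : ∀ i, ∀ t ∈ maxElems T₀, D i t ⊆ wordsOver B)
    (hDnil : ∀ i, ∀ t ∈ maxElems T₀, [] ∉ D i t) :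
    graft T₀ (fun t => ⋂ i, D i t) = ⋂ i, graft T₀ (D i) := by
  have hne {i t v} (ht : t ∈ maxElems T₀) (hv : v ∈ D i t) : v ≠ [] :=
    fun h => hDnil i t ht (h ▸ hv)
  refine subset_antisymm ?_ fun s hs => ?_
  · rintro _ ⟨t, ht, v, hv, rfl⟩
    exact Set.mem_iInter.mpr fun i => ⟨t, ht, v, Set.mem_iInter.mp hv i, rfl⟩
  obtain ⟨t, ht, v, hv, rfl⟩ := Set.mem_iInter.mp hs (Classical.arbitrary ι)
  refine ⟨t, ht, v, Set.mem_iInter.mpr fun j => ?_, rfl⟩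
  obtain ⟨t', ht', w, hw, h⟩ := Set.mem_iInter.mp hs j
  obtain ⟨rfl, -⟩ := eq_and_prefix_of_append_prefix_append hAB (hT₀ ht.1) (hT₀ ht'.1)
    (hDB _ t ht hv) (hDB j t' ht' hw) (hne ht hv) (hne ht' hw) (h ▸ List.prefix_refl _)
  exact List.append_cancel_left h ▸ hw

lemma derivIter_union_graft (hAB : Disjoint A B) (hT₀ : T₀ ⊆ wordsOver A)
    (hT₀max : ∀ s ∈ T₀, ∃ t ∈ maxElems T₀, s <+: t) {Tt : List S → Set (List S)}
    (hTtB : ∀ t ∈ maxElems T₀, Tt t ⊆ wordsOver B) (hTtnil : ∀ t ∈ maxElems T₀, [] ∉ Tt t)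
    {ξ : Ordinal} (hTtξ : ∀ t ∈ maxElems T₀, ∀ η < ξ, derivIter (Tt t) η ≠ ∅)
    (η : Ordinal) (hη : η ≤ ξ) :
    derivIter (T₀ ∪ graft T₀ Tt) η = T₀ ∪ graft T₀ (fun t => derivIter (Tt t) η) := by
  have hB {t} (ht : t ∈ maxElems T₀) (o : Ordinal) : derivIter (Tt t) o ⊆ wordsOver B :=
    (derivIter_subset _ o).trans (hTtB t ht)
  have hnil {t} (ht : t ∈ maxElems T₀) (o : Ordinal) : [] ∉ derivIter (Tt t) o :=
    fun h => hTtnil t ht (derivIter_subset _ o h)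
  induction η using Ordinal.limitRecOn with
  | zero => simp
  | add_one c ih =>
    have hc : c < ξ := Order.add_one_le_iff.mp hη
    simp only [derivIter_add_one, ih hc.le]
    exact derivTree_union_graft hAB hT₀ hT₀max (fun t ht => hB ht c) (fun t ht => hnil ht c)
      fun t ht => Set.nonempty_iff_ne_empty.mpr (hTtξ t ht c hc)
  | limit b hb ih =>
    have : Nonempty (Set.Iio b) := ⟨⟨0, hb.bot_lt⟩⟩
    calc derivIter (T₀ ∪ graft T₀ Tt) b
        = ⋂ d : Set.Iio b, T₀ ∪ graft T₀ (fun t => derivIter (Tt t) d) := by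
          rw [derivIter_limit _ hb]
          exact Set.iInter_congr fun d => ih d d.2 (d.2.le.trans hη)
      _ = T₀ ∪ graft T₀ (fun t => ⋂ d : Set.Iio b, derivIter (Tt t) d) := by
          rw [← Set.union_iInter]
          exact congrArg (T₀ ∪ ·)
            (graft_iInter hAB hT₀ (D := fun (d : Set.Iio b) t => derivIter (Tt t) d)
              (fun d t ht => hB ht d) (fun d t ht => hnil ht d)).symm
      _ = T₀ ∪ graft T₀ (fun t => derivIter (Tt t) b) := by
          simp only [derivIter_limit _ hb]

end Graft

end TreeOrder

/-- Placing a `B`-tree of order `ξ` above every maximal node of a `B`-tree of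
order `ζ` (on a disjoint alphabet) gives a `B`-tree of order `ξ + ζ`. -/
theorem order_append_above_max {S : Type*} (A B : Set S) (hAB : Disjoint A B)
    (ξ ζ : Ordinal) (hζ : ζ ≠ 0)
    (T₀ : Set (List S)) (hT₀ : IsBTree T₀) (hT₀A : ∀ t ∈ T₀, ∀ x ∈ t, x ∈ A)
    (hT₀ord : hasOrder T₀ ζ)
    (Tt : List S → Set (List S))
    (hTt : ∀ t ∈ maxElems T₀, IsBTree (Tt t))
    (hTtB : ∀ t ∈ maxElems T₀, ∀ u ∈ Tt t, ∀ x ∈ u, x ∈ B)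
    (hTtord : ∀ t ∈ maxElems T₀, hasOrder (Tt t) ξ) :
    IsBTree (T₀ ∪ {u : List S | ∃ t ∈ maxElems T₀, ∃ v ∈ Tt t, u = t ++ v}) ∧
    (∀ u ∈ T₀ ∪ {u : List S | ∃ t ∈ maxElems T₀, ∃ v ∈ Tt t, u = t ++ v},
      ∀ x ∈ u, x ∈ A ∪ B) ∧
    hasOrder (T₀ ∪ {u : List S | ∃ t ∈ maxElems T₀, ∃ v ∈ Tt t, u = t ++ v}) (ξ + ζ) := by
  have hξ : derivIter (T₀ ∪ graft T₀ Tt) ξ = T₀ := by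
    rw [derivIter_union_graft hAB hT₀A (fun s hs => exists_prefix_mem_maxElems hT₀ord.1 hs) hTtB
      (fun t ht => (hTt t ht).1) (fun t ht => (hTtord t ht).2) ξ le_rfl, Set.union_eq_left]
    rintro _ ⟨t, ht, v, hv, -⟩
    simp [(hTtord t ht).1] at hv
  exact ⟨hT₀.union_graft hTt, union_graft_subset_wordsOver hT₀A hTtB, hasOrder_add hξ hT₀ord hζ⟩
end

section
/- Let ξ be a limit ordinal, and suppose for each ζ < ξ there are ordinals ξ_{0,ζ}, ξ_{1,ζ} with ξ_{0,ζ} ⊕ ξ_{1,ζ} = ζ + 1 (Hessenberg sum). Then there exist a set A ⊆ [0,ξ), ordinals ξ_0, ξ_1 with ξ_0 ⊕ ξ_1 = ξ, and j ∈ {0,1} such that ξ_j is a limit ordinal, sup_{ζ∈A} ξ_{j,ζ} = ξ_j, and ξ_{1−j,ζ} ≥ ξ_{1−j} for all ζ ∈ A. -/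
open Ordinal
universe u

namespace Ordinal

/-- Natural (Hessenberg) addition of ordinals. -/
noncomputable def nadd : Ordinal.{u} → Ordinal.{u} → Ordinal.{u}
  | a, b =>
    max (blsub.{u, u} a fun a' _ => nadd a' b) (blsub.{u, u} b fun b' _ => nadd a b')
termination_by a b => (a, b)
decreasing_by
  · exact Prod.Lex.left _ _ ‹_›
  · exact Prod.Lex.right _ ‹_›

end Ordinal

infixl:65 " ♯ " => Ordinal.nadd

/-!
Write `ξ = ω ^ γ * (c + 1)` with `γ ≠ 0` (as `ξ` is a limit) and put `κ = ω ^ γ`, so that the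
ordinals in `[κ * c, ξ)` are the `κ * c + η` with `η < κ`. Since `κ` is closed under `♯`, natural
addition acts digit-wise in base `κ`: `(a ♯ b) / κ = a / κ ♯ b / κ` and
`(a ♯ b) % κ = a % κ ♯ b % κ`. Hence for `ζ = κ * c + η` the quotients of `g 0 ζ` and `g 1 ζ`
by `κ` form one of the finitely many `♯`-decompositions of `c` (these form an antichain in a
well-quasi-order), while their remainders have natural sum `η + 1`. By pigeonhole, for some
decomposition `a` and some side `j` the remainders are cofinal in `κ`: otherwise, with `B < κ`
the largest `♯`-sum of their bounds, the point `η = B` would give `B + 1 ≤ B`. Take for `A` the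
corresponding `ζ`, `x j = κ * a j + κ` and `x (1 - j) = κ * a (1 - j)`.
-/

open Order Set

namespace Ordinal

set_option linter.deprecated false in
theorem nadd_le_iff {a b c : Ordinal.{u}} :
    b ♯ c ≤ a ↔ (∀ b' < b, b' ♯ c < a) ∧ ∀ c' < c, b ♯ c' < a := by
  rw [nadd]
  simp [blsub_le_iff]

theorem lt_nadd_iff {a b c : Ordinal.{u}} :
    a < b ♯ c ↔ (∃ b' < b, a ≤ b' ♯ c) ∨ ∃ c' < c, a ≤ b ♯ c' := by
  simpa only [not_le, not_and_or, not_forall, not_lt, exists_prop] using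
    not_congr (nadd_le_iff (a := a))

theorem nadd_lt_nadd_left {b c : Ordinal.{u}} (h : b < c) (a : Ordinal.{u}) : a ♯ b < a ♯ c :=
  lt_nadd_iff.2 (.inr ⟨b, h, le_rfl⟩)

theorem nadd_lt_nadd_right {b c : Ordinal.{u}} (h : b < c) (a : Ordinal.{u}) : b ♯ a < c ♯ a :=
  lt_nadd_iff.2 (.inl ⟨b, h, le_rfl⟩)

theorem nadd_le_nadd_left {b c : Ordinal.{u}} (h : b ≤ c) (a : Ordinal.{u}) : a ♯ b ≤ a ♯ c :=
  h.eq_or_lt.elim (fun h => h ▸ le_rfl) fun h => (nadd_lt_nadd_left h a).le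

theorem nadd_le_nadd_right {b c : Ordinal.{u}} (h : b ≤ c) (a : Ordinal.{u}) : b ♯ a ≤ c ♯ a :=
  h.eq_or_lt.elim (fun h => h ▸ le_rfl) fun h => (nadd_lt_nadd_right h a).le

theorem nadd_le_nadd {a b c d : Ordinal.{u}} (h₁ : a ≤ b) (h₂ : c ≤ d) : a ♯ c ≤ b ♯ d :=
  (nadd_le_nadd_left h₂ a).trans (nadd_le_nadd_right h₁ d)

theorem nadd_comm (a b : Ordinal.{u}) : a ♯ b = b ♯ a := by
  suffices ∀ a b : Ordinal.{u}, a ♯ b ≤ b ♯ a from (this a b).antisymm (this b a)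
  intro a b
  induction a using WellFoundedLT.induction generalizing b with | _ a IHa =>
  induction b using WellFoundedLT.induction with | _ b IHb =>
  exact nadd_le_iff.2 ⟨fun a' ha' => (IHa a' ha' b).trans_lt (nadd_lt_nadd_left ha' b),
    fun b' hb' => (IHb b' hb').trans_lt (nadd_lt_nadd_right hb' a)⟩

@[simp]
theorem nadd_zero (a : Ordinal.{u}) : a ♯ 0 = a := by
  induction a using WellFoundedLT.induction with | _ a IH =>
  refine le_antisymm (nadd_le_iff.2 ⟨fun a' ha' => ?_, fun c hc => (not_lt_zero hc).elim⟩)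
    (le_of_forall_lt fun a' ha' => lt_nadd_iff.2 (.inl ⟨a', ha', (IH a' ha').ge⟩))
  rwa [IH a' ha']

theorem nadd_assoc (a b c : Ordinal.{u}) : a ♯ b ♯ c = a ♯ (b ♯ c) := by
  induction a using WellFoundedLT.induction generalizing b c with | _ a IHa =>
  induction b using WellFoundedLT.induction generalizing c with | _ b IHb =>
  induction c using WellFoundedLT.induction with | _ c IHc =>
  apply le_antisymm
  · refine nadd_le_iff.2 ⟨fun d hd => ?_, fun c' hc' => ?_⟩
    · rcases lt_nadd_iff.1 hd with ⟨a', ha', hle⟩ | ⟨b', hb', hle⟩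
      · calc d ♯ c ≤ a' ♯ b ♯ c := nadd_le_nadd_right hle c
          _ = a' ♯ (b ♯ c) := IHa a' ha' b c
          _ < a ♯ (b ♯ c) := nadd_lt_nadd_right ha' _
      · calc d ♯ c ≤ a ♯ b' ♯ c := nadd_le_nadd_right hle c
          _ = a ♯ (b' ♯ c) := IHb b' hb' c
          _ < a ♯ (b ♯ c) := nadd_lt_nadd_left (nadd_lt_nadd_right hb' c) a
    · rw [IHc c' hc']
      exact nadd_lt_nadd_left (nadd_lt_nadd_left hc' b) a
  · refine nadd_le_iff.2 ⟨fun a' ha' => ?_, fun d hd => ?_⟩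
    · rw [← IHa a' ha']
      exact nadd_lt_nadd_right (nadd_lt_nadd_right ha' b) c
    · rcases lt_nadd_iff.1 hd with ⟨b', hb', hle⟩ | ⟨c', hc', hle⟩
      · calc a ♯ d ≤ a ♯ (b' ♯ c) := nadd_le_nadd_left hle a
          _ = a ♯ b' ♯ c := (IHb b' hb' c).symm
          _ < a ♯ b ♯ c := nadd_lt_nadd_right (nadd_lt_nadd_left hb' a) c
      · calc a ♯ d ≤ a ♯ (b ♯ c') := nadd_le_nadd_left hle a
          _ = a ♯ b ♯ c' := (IHc c' hc').symm
          _ < a ♯ b ♯ c := nadd_lt_nadd_left hc' _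

theorem nadd_left_comm (a b c : Ordinal.{u}) : a ♯ (b ♯ c) = b ♯ (a ♯ c) := by
  rw [← nadd_assoc, nadd_comm a b, nadd_assoc]

theorem nadd_right_comm (a b c : Ordinal.{u}) : a ♯ b ♯ c = a ♯ c ♯ b := by
  rw [nadd_assoc, nadd_comm b c, ← nadd_assoc]

theorem nadd_nadd_nadd_comm (a b c d : Ordinal.{u}) : a ♯ b ♯ (c ♯ d) = a ♯ c ♯ (b ♯ d) := by
  rw [nadd_assoc, nadd_left_comm b, ← nadd_assoc]

theorem nadd_one (a : Ordinal.{u}) : a ♯ 1 = a + 1 := by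
  induction a using WellFoundedLT.induction with | _ a IH =>
  refine le_antisymm (nadd_le_iff.2 ⟨fun a' ha' => ?_, fun c hc => ?_⟩) ?_
  · simpa [IH a' ha'] using ha'
  · rw [Order.lt_one_iff.1 hc, nadd_zero]
    exact lt_add_one a
  · simpa using add_one_le_of_lt (nadd_lt_nadd_left zero_lt_one a)

theorem nadd_add_one (a b : Ordinal.{u}) : a ♯ (b + 1) = a ♯ b + 1 := by
  rw [← nadd_one, ← nadd_one, nadd_assoc]

theorem add_one_nadd (a b : Ordinal.{u}) : (a + 1) ♯ b = a ♯ b + 1 := by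
  rw [nadd_comm, nadd_add_one, nadd_comm]

theorem nadd_natCast (a : Ordinal.{u}) (n : ℕ) : a ♯ n = a + n := by
  induction n with
  | zero => simp
  | succ n ih => rw [Nat.cast_succ, nadd_add_one, ih, add_assoc]

theorem nadd_add_le_add_nadd (a b c : Ordinal.{u}) : a ♯ b + c ≤ (a + c) ♯ b := by
  induction c using Ordinal.limitRecOn with
  | zero => simp
  | add_one c h => simpa [← add_assoc, add_one_nadd] using h
  | limit c hc H =>
    exact (add_le_iff_of_isSuccLimit hc).2 fun d hd =>
      (H d hd).trans (nadd_le_nadd_right (by gcongr) b)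

theorem add_le_nadd (a b : Ordinal.{u}) : a + b ≤ a ♯ b := by
  simpa [nadd_comm] using nadd_add_le_add_nadd 0 a b

theorem isPrincipal_nadd_omega0 : IsPrincipal (· ♯ ·) ω := by
  intro a b ha hb
  show a ♯ b < ω
  obtain ⟨m, rfl⟩ := lt_omega0.1 ha
  obtain ⟨n, rfl⟩ := lt_omega0.1 hb
  rw [nadd_natCast, ← Nat.cast_add]
  exact natCast_lt_omega0 _

section Digits

variable {o : Ordinal.{u}}

theorem mul_nadd_of_lt (ho : IsPrincipal (· ♯ ·) o) (q : Ordinal.{u}) {t : Ordinal.{u}}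
    (ht : t < o) : o * q ♯ t = o * q + t := by
  induction q using WellFoundedLT.induction generalizing t with | _ q IHq =>
  induction t using WellFoundedLT.induction with | _ t IHt =>
  refine le_antisymm (nadd_le_iff.2 ⟨fun a ha => ?_, fun t' ht' => ?_⟩) (add_le_nadd _ _)
  · obtain ⟨q', hq', r, hr, rfl⟩ := lt_mul_iff.1 ha
    have hrt : r ♯ t < o := ho hr ht
    calc (o * q' + r) ♯ t = o * q' + (r ♯ t) := by
          rw [← IHq q' hq' hr, nadd_assoc, IHq q' hq' hrt]
      _ < o * q' + o := by gcongr
      _ = o * (q' + 1) := (mul_add_one _ _).symm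
      _ ≤ o * q := by gcongr; exact add_one_le_of_lt hq'
      _ ≤ o * q + t := le_self_add
  · rw [IHt t' ht' (ht'.trans ht)]
    gcongr

theorem mul_nadd_mul (ho : IsPrincipal (· ♯ ·) o) (q p : Ordinal.{u}) :
    o * q ♯ o * p = o * (q ♯ p) := by
  have upper : ∀ {q p : Ordinal.{u}}, (∀ q' < q, o * q' ♯ o * p = o * (q' ♯ p)) →
      ∀ a < o * q, a ♯ o * p < o * (q ♯ p) := by
    intro q p IH a ha
    obtain ⟨q', hq', r, hr, rfl⟩ := lt_mul_iff.1 ha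
    calc (o * q' + r) ♯ o * p = o * (q' ♯ p) + r := by
          rw [← mul_nadd_of_lt ho q' hr, nadd_right_comm, IH q' hq', mul_nadd_of_lt ho _ hr]
      _ < o * (q' ♯ p) + o := by gcongr
      _ = o * (q' ♯ p + 1) := (mul_add_one _ _).symm
      _ ≤ o * (q ♯ p) := by gcongr; exact add_one_le_of_lt (nadd_lt_nadd_right hq' p)
  have lower : ∀ {q p q' : Ordinal.{u}}, q' < q → o * q' ♯ o * p = o * (q' ♯ p) →
      o * (q' ♯ p) + o ≤ o * q ♯ o * p := by
    intro q p q' hq' IH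
    calc o * (q' ♯ p) + o = o * q' ♯ o * p + o := by rw [IH]
      _ ≤ (o * q' + o) ♯ o * p := nadd_add_le_add_nadd _ _ _
      _ = o * (q' + 1) ♯ o * p := by rw [mul_add_one]
      _ ≤ o * q ♯ o * p := nadd_le_nadd_right (by gcongr; exact add_one_le_of_lt hq') _
  induction q using WellFoundedLT.induction generalizing p with | _ q IHq =>
  induction p using WellFoundedLT.induction with | _ p IHp =>
  have IHp' : ∀ p' < p, o * p' ♯ o * q = o * (p' ♯ q) := fun p' hp' => by
    rw [nadd_comm, IHp p' hp', nadd_comm]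
  apply le_antisymm
  · refine nadd_le_iff.2 ⟨upper fun q' hq' => IHq q' hq' p, fun b hb => ?_⟩
    rw [nadd_comm, nadd_comm q]
    exact upper IHp' b hb
  · refine le_of_forall_lt fun x hx => ?_
    obtain ⟨s, hs, r, hr, rfl⟩ := lt_mul_iff.1 hx
    refine (by gcongr : o * s + r < o * s + o).trans_le ?_
    rcases lt_nadd_iff.1 hs with ⟨q', hq', hle⟩ | ⟨p', hp', hle⟩
    · exact (by gcongr : o * s + o ≤ o * (q' ♯ p) + o).trans (lower hq' (IHq q' hq' p))
    · rw [nadd_comm (o * q)]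
      rw [nadd_comm] at hle
      exact (by gcongr : o * s + o ≤ o * (p' ♯ q) + o).trans (lower hp' (IHp' p' hp'))

theorem nadd_eq_mul_add (ho : IsPrincipal (· ♯ ·) o) (ho₀ : o ≠ 0) (a b : Ordinal.{u}) :
    a ♯ b = o * (a / o ♯ b / o) + (a % o ♯ b % o) := by
  have ha := mod_lt a ho₀
  have hb := mod_lt b ho₀
  calc a ♯ b = (o * (a / o) ♯ a % o) ♯ (o * (b / o) ♯ b % o) := by
        rw [mul_nadd_of_lt ho _ ha, mul_nadd_of_lt ho _ hb, div_add_mod, div_add_mod]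
    _ = o * (a / o ♯ b / o) + (a % o ♯ b % o) := by
        rw [nadd_nadd_nadd_comm, mul_nadd_mul ho, mul_nadd_of_lt ho _ (ho ha hb)]

theorem nadd_div (ho : IsPrincipal (· ♯ ·) o) (ho₀ : o ≠ 0) (a b : Ordinal.{u}) :
    (a ♯ b) / o = a / o ♯ b / o := by
  rw [nadd_eq_mul_add ho ho₀, mul_add_div _ ho₀,
    div_eq_zero_of_lt (ho (mod_lt a ho₀) (mod_lt b ho₀)), add_zero]

theorem nadd_mod (ho : IsPrincipal (· ♯ ·) o) (ho₀ : o ≠ 0) (a b : Ordinal.{u}) :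
    (a ♯ b) % o = a % o ♯ b % o := by
  rw [nadd_eq_mul_add ho ho₀, mul_add_mod_self, mod_eq_of_lt (ho (mod_lt a ho₀) (mod_lt b ho₀))]

theorem isPrincipal_nadd_mul (ho : IsPrincipal (· ♯ ·) o) {μ : Ordinal.{u}}
    (hμ : IsPrincipal (· ♯ ·) μ) : IsPrincipal (· ♯ ·) (o * μ) := by
  rcases eq_or_ne o 0 with rfl | ho₀
  · simp [IsPrincipal]
  intro a b ha hb
  have hdiv : a / o ♯ b / o < μ := hμ ((lt_mul_iff_div_lt ho₀).1 ha) ((lt_mul_iff_div_lt ho₀).1 hb)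
  calc a ♯ b = o * (a / o ♯ b / o) + (a % o ♯ b % o) := nadd_eq_mul_add ho ho₀ a b
    _ < o * (a / o ♯ b / o) + o := by gcongr; exact ho (mod_lt a ho₀) (mod_lt b ho₀)
    _ = o * (a / o ♯ b / o + 1) := (mul_add_one _ _).symm
    _ ≤ o * μ := by gcongr; exact add_one_le_of_lt hdiv

end Digits

theorem isPrincipal_nadd_opow (δ : Ordinal.{u}) : IsPrincipal (· ♯ ·) (ω ^ δ) := by
  induction δ using Ordinal.limitRecOn with
  | zero => simp
  | add_one e h => rw [opow_add_one]; exact isPrincipal_nadd_mul h isPrincipal_nadd_omega0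
  | limit δ hδ IH =>
    rw [opow_limit omega0_ne_zero hδ]
    exact IsPrincipal.iSup fun e => IH e.1 e.2

theorem finite_setOf_nadd_eq (c : Ordinal.{u}) :
    {a : Fin 2 → Ordinal.{u} | a 0 ♯ a 1 = c}.Finite := by
  refine WellQuasiOrderedLE.finite_of_isAntichain <|
    IsAntichain.of_strictMonoOn_antitoneOn (f := fun a : Fin 2 → Ordinal.{u} => a 0 ♯ a 1)
      (fun a _ b _ hab => ?_) fun a ha b hb _ => (ha.trans hb.symm).ge
  obtain ⟨hle, i, hi⟩ := Pi.lt_def.1 hab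
  fin_cases i
  · exact (nadd_lt_nadd_right hi _).trans_le (nadd_le_nadd_left (hle 1) _)
  · exact (nadd_lt_nadd_left hi _).trans_le (nadd_le_nadd_right (hle 0) _)

theorem exists_cofinal_fiber_of_lt_nadd {α : Type*} {κ : Ordinal.{u}}
    (hκ : IsPrincipal (· ♯ ·) κ) (hκ₀ : κ ≠ 0) (p : Ordinal.{u} → α) (hp : (p '' Iio κ).Finite)
    (t : Fin 2 → Ordinal.{u} → Ordinal.{u}) (ht : ∀ η < κ, η < t 0 η ♯ t 1 η) :
    ∃ a j, ∀ β < κ, ∃ η < κ, p η = a ∧ β < t j η := by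
  by_contra! h
  choose β hβκ hβ using h
  obtain ⟨_, ⟨η, -, rfl⟩, hmax⟩ := (p '' Iio κ).exists_max_image (fun a => β a 0 ♯ β a 1) hp
    ⟨p 0, 0, pos_iff_ne_zero.2 hκ₀, rfl⟩
  set B := β (p η) 0 ♯ β (p η) 1
  have hB : B < κ := hκ (hβκ _ 0) (hβκ _ 1)
  have : B < B := calc
    B < t 0 B ♯ t 1 B := ht B hB
    _ ≤ β (p B) 0 ♯ β (p B) 1 := nadd_le_nadd (hβ _ 0 B hB rfl) (hβ _ 1 B hB rfl)
    _ ≤ B := hmax _ ⟨B, hB, rfl⟩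
  exact this.false

theorem exists_eq_opow_mul_add_one {ξ : Ordinal.{u}} (hξ : ξ ≠ 0) :
    ∃ γ c : Ordinal.{u}, ξ = ω ^ γ * (c + 1) := by
  induction ξ using WellFoundedLT.induction with | _ ξ IH =>
  -- `ξ = ω ^ l * q + r` with `q < ω`: the trailing exponent is `l` if `r = 0`, else that of `r`.
  set l := log ω ξ
  have hξl := div_add_mod ξ (ω ^ l)
  rcases eq_or_ne (ξ % ω ^ l) 0 with hr | hr
  · obtain ⟨n, hn⟩ := lt_omega0.1 (div_opow_log_lt ξ one_lt_omega0)
    rw [hr, add_zero, hn] at hξl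
    obtain ⟨m, rfl⟩ := Nat.exists_eq_add_one_of_ne_zero (n := n) (by
      rintro rfl
      exact hξ (by simpa using hξl.symm))
    exact ⟨l, m, by rw [← hξl]; push_cast; rfl⟩
  · have hrl := mod_lt ξ (opow_ne_zero l omega0_ne_zero)
    obtain ⟨γ, c, hc⟩ := IH _ (hrl.trans_le (opow_log_le_self ω hξ)) hr
    have hγ : γ ≤ l := by
      rw [← opow_le_opow_iff_right one_lt_omega0]
      exact (le_mul_left _ (add_pos_of_right zero_lt_one c)).trans (hc ▸ hrl).le
    obtain ⟨d, hd⟩ := opow_dvd_opow ω hγ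
    refine ⟨γ, d * (ξ / ω ^ l) + c, ?_⟩
    calc ξ = ω ^ l * (ξ / ω ^ l) + ξ % ω ^ l := hξl.symm
      _ = ω ^ γ * (d * (ξ / ω ^ l) + c + 1) := by rw [hc, hd, mul_assoc, ← mul_add, add_assoc]

theorem sSup_image_add_of_cofinal {a c : Ordinal.{u}} {T : Set Ordinal.{u}} (hc : c ≠ 0)
    (hT : ∀ t ∈ T, t < c) (hcof : ∀ β < c, ∃ t ∈ T, β < t) : sSup ((a + ·) '' T) = a + c := by
  obtain ⟨t, ht, -⟩ := hcof 0 (pos_iff_ne_zero.2 hc)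
  rw [← (isNormal_add_right a).map_sSup ⟨t, ht⟩ ⟨c, fun t ht => (hT t ht).le⟩,
    csSup_eq_of_forall_le_of_forall_lt_exists_gt ⟨t, ht⟩ (fun t ht => (hT t ht).le) hcof]

theorem exists_split_of_cofinal_fiber {κ c : Ordinal.{u}} (hκp : IsPrincipal (· ♯ ·) κ)
    (hκ : IsSuccLimit κ) (g : Fin 2 → Ordinal.{u} → Ordinal.{u}) {a : Fin 2 → Ordinal.{u}}
    {j : Fin 2} (ha : a 0 ♯ a 1 = c)
    (hcof : ∀ β < κ, ∃ η < κ, (fun i => g i (κ * c + η) / κ) = a ∧ β < g j (κ * c + η) % κ) :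
    ∃ (A : Set Ordinal.{u}) (x : Fin 2 → Ordinal.{u}),
      A ⊆ Iio (κ * (c + 1)) ∧ x 0 ♯ x 1 = κ * (c + 1) ∧ IsSuccLimit (x j) ∧
      sSup (g j '' A) = x j ∧ ∀ ζ ∈ A, x (1 - j) ≤ g (1 - j) ζ := by
  have hκ₀ : κ ≠ 0 := hκ.ne_bot
  set S := {η | η < κ ∧ (fun i => g i (κ * c + η) / κ) = a}
  have hdecomp : ∀ η ∈ S, ∀ i, g i (κ * c + η) = κ * a i + g i (κ * c + η) % κ := by
    rintro η ⟨-, rfl⟩ i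
    exact (div_add_mod _ _).symm
  have hj : 1 - j ≠ j := by fin_cases j <;> decide
  refine ⟨(κ * c + ·) '' S, fun i => if i = j then κ * a i + κ else κ * a i, ?_, ?_, ?_, ?_, ?_⟩
  · rintro _ ⟨η, ⟨hη, -⟩, rfl⟩
    rw [mem_Iio, mul_add_one]
    beta_reduce
    gcongr
  · have hκa (i : Fin 2) : κ * a i + κ = κ * (a i + 1) := (mul_add_one _ _).symm
    fin_cases j <;> simp [hκa, mul_nadd_mul hκp, add_one_nadd, nadd_add_one, ha]
  · simpa using isSuccLimit_add _ hκ
  · have himage : g j '' ((κ * c + ·) '' S) =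
        (κ * a j + ·) '' ((fun η => g j (κ * c + η) % κ) '' S) := by
      rw [image_image, image_image]
      exact image_congr fun η hη => hdecomp η hη j
    beta_reduce
    rw [if_pos rfl, himage]
    refine sSup_image_add_of_cofinal hκ₀ (fun _ ⟨η, _, ht⟩ => ht ▸ mod_lt _ hκ₀) fun β hβ => ?_
    obtain ⟨η, hη, hηa, hβη⟩ := hcof β hβ
    exact ⟨_, ⟨η, ⟨hη, hηa⟩, rfl⟩, hβη⟩
  · rintro _ ⟨η, hη, rfl⟩
    beta_reduce
    rw [if_neg hj, hdecomp η hη]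
    exact le_self_add

end Ordinal

/-- Splitting technique: if `ξ` is a limit ordinal and for every `ζ < ξ` we have
`ξ_{0,ζ} ⊕ ξ_{1,ζ} = ζ + 1`, then there are `A ⊆ [0,ξ)`, ordinals `ξ_0, ξ_1` with
`ξ_0 ⊕ ξ_1 = ξ` and `j ∈ {0,1}` with `ξ_j` a limit ordinal,
`sup_{ζ∈A} ξ_{j,ζ} = ξ_j` and `ξ_{1−j,ζ} ≥ ξ_{1−j}` for all `ζ ∈ A`. -/
theorem splitting_technique (ξ : Ordinal) (hξ : Order.IsSuccLimit ξ)
    (g : Fin 2 → Ordinal → Ordinal)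
    (hg : ∀ ζ < ξ, g 0 ζ ♯ g 1 ζ = ζ + 1) :
    ∃ (A : Set Ordinal) (x : Fin 2 → Ordinal) (j : Fin 2),
      A ⊆ Set.Iio ξ ∧ x 0 ♯ x 1 = ξ ∧ Order.IsSuccLimit (x j) ∧
      sSup (g j '' A) = x j ∧ ∀ ζ ∈ A, x (1 - j) ≤ g (1 - j) ζ := by
  obtain ⟨γ, c, rfl⟩ := exists_eq_opow_mul_add_one hξ.ne_bot
  have hγ : γ ≠ 0 := by
    rintro rfl
    simp at hξ
  set κ := ω ^ γ
  have hκ : IsSuccLimit κ := isSuccLimit_opow_left isSuccLimit_omega0 hγ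
  have hκp : IsPrincipal (· ♯ ·) κ := isPrincipal_nadd_opow γ
  have hdigits : ∀ η < κ, g 0 (κ * c + η) / κ ♯ g 1 (κ * c + η) / κ = c ∧
      g 0 (κ * c + η) % κ ♯ g 1 (κ * c + η) % κ = η + 1 := by
    intro η hη
    have hη₁ : η + 1 < κ := hκ.add_one_lt hη
    rw [← nadd_div hκp hκ.ne_bot, ← nadd_mod hκp hκ.ne_bot, hg _ (by rw [mul_add_one]; gcongr),
      add_assoc, mul_add_div _ hκ.ne_bot, div_eq_zero_of_lt hη₁, add_zero, mul_add_mod_self,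
      mod_eq_of_lt hη₁]
    exact ⟨rfl, rfl⟩
  obtain ⟨a, j, hcof⟩ := exists_cofinal_fiber_of_lt_nadd hκp hκ.ne_bot
    (fun η i => g i (κ * c + η) / κ)
    ((finite_setOf_nadd_eq c).subset (by rintro _ ⟨η, hη, rfl⟩; exact (hdigits η hη).1))
    (fun i η => g i (κ * c + η) % κ) fun η hη => (hdigits η hη).2 ▸ lt_add_one η
  obtain ⟨η, hη, rfl, -⟩ := hcof 0 hκ.bot_lt
  obtain ⟨A, x, hA⟩ := exists_split_of_cofinal_fiber hκp hκ g (hdigits η hη).1 hcof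
  exact ⟨A, x, j, hA⟩
end

section
/- For every ordinal ξ ≥ 1, if the maximal elements of the minimal tree 𝒯_ξ are partitioned (or covered) by two sets 𝒞^0 ∪ 𝒞^1 = MAX(𝒯_ξ), then there exist j ∈ {0,1}, an order preserving map i : 𝒯_ξ → 𝒯_ξ, and a map e : MAX(𝒯_ξ) → MAX(𝒯_ξ) with i(t) ⪯ e(t) for all maximal t, such that e(MAX(𝒯_ξ)) ⊆ 𝒞^j. -/
/-! Induction on `ξ`, for any finite number of colors. At a successor,
`𝒯_(ζ+1) = {(ζ+1)} ∪ {(ζ+1)⌢t : t ∈ 𝒯_ζ}`: color `t ∈ MAX(𝒯_ζ)` by the color of `(ζ+1)⌢t` and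
prepend `ζ+1` to the maps obtained for `𝒯_ζ`. At a limit `λ`, `𝒯_λ` is the union of the
`𝒯_(ζ+1)`, `ζ < λ`, no element of one being a prefix of an element of another. Each `𝒯_(ζ+1)`
carries a monochromatic map of some color `J ζ`, and some color `j` occurs cofinally often.
Since `𝒯_(ζ+1)` embeds into `𝒯_(η+1)` for `ζ ≤ η`, every `𝒯_(ζ+1)` maps into a later piece whose
map has color `j`, and these maps glue to one on `𝒯_λ`. -/

open Ordinal

/-- The minimal trees: `𝒯_0 = ∅`, `𝒯_(ξ+1) = {(ξ+1)} ∪ {(ξ+1)⌢t : t ∈ 𝒯_ξ}`,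
and `𝒯_λ = ⋃_(ζ<λ) 𝒯_(ζ+1)` at limits. -/
noncomputable def minTree (ξ : Ordinal) : Set (List Ordinal) :=
  Ordinal.limitRecOn ξ ∅
    (fun ζ ih => {l : List Ordinal | l = [Order.succ ζ] ∨ ∃ t ∈ ih, l = Order.succ ζ :: t})
    (fun o ho ih => ⋃ (ζ : Set.Iio o), ih (Order.succ ζ.1) (ho.succ_lt ζ.2))

open Set

theorem exists_isCofinal_preimage_singleton {β γ : Type*} [Preorder β] [IsDirected β (· ≤ ·)]
    [Finite γ] [Nonempty γ] (J : β → γ) : ∃ j, IsCofinal (J ⁻¹' {j}) := by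
  rcases isEmpty_or_nonempty β with _ | _
  · exact ⟨Classical.arbitrary γ, .of_isEmpty⟩
  obtain ⟨j, hj⟩ := Filter.frequently_exists (p := fun j b => J b = j) |>.1 <|
    Filter.Frequently.of_forall (f := Filter.atTop) fun b => ⟨J b, rfl⟩
  refine ⟨j, fun a => ?_⟩
  obtain ⟨b, hab, hb⟩ := Filter.frequently_atTop.1 hj a
  exact ⟨b, hb, hab⟩

section PrefixTrees

variable {α ι : Type*} {S T U C : Set (List α)} {i e u : List α → List α} {s t : List α}

theorem properPrefix_cons_cons {a : α} : ProperPrefix (a :: s) (a :: t) ↔ ProperPrefix s t := by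
  simp [ProperPrefix, List.cons_prefix_cons]

theorem nil_properPrefix : ProperPrefix [] t ↔ t ≠ [] := by
  simp [ProperPrefix, eq_comm]

theorem not_properPrefix_nil : ¬ ProperPrefix s [] := fun h =>
  h.2 (List.prefix_nil.1 h.1)

theorem maxElems_subset (T : Set (List α)) : maxElems T ⊆ T := fun _ ht => ht.1

theorem mem_maxElems_of_subset (hST : S ⊆ T) (ht : t ∈ maxElems T) (hs : t ∈ S) :
    t ∈ maxElems S :=
  ⟨hs, fun ⟨u, hu, htu⟩ => ht.2 ⟨u, hST hu, htu⟩⟩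

def OrderPreservingOn (i : List α → List α) (S T : Set (List α)) : Prop :=
  MapsTo i S T ∧ ∀ s ∈ S, ∀ t ∈ S, ProperPrefix s t → ProperPrefix (i s) (i t)

def IsExtOrderPreserving (i e : List α → List α) (S T C : Set (List α)) : Prop :=
  OrderPreservingOn i S T ∧ ∀ t ∈ maxElems S, e t ∈ maxElems T ∧ i t <+: e t ∧ e t ∈ C

def MaxColoringRamsey (ι : Type*) (S : Set (List α)) : Prop :=
  ∀ C : ι → Set (List α), maxElems S ⊆ ⋃ j, C j →
    ∃ j i e, IsExtOrderPreserving i e S S (C j)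

namespace OrderPreservingOn

protected theorem id : OrderPreservingOn id S S := ⟨mapsTo_id S, fun _ _ _ _ h => h⟩

theorem comp (hi : OrderPreservingOn i T U) (hu : OrderPreservingOn u S T) :
    OrderPreservingOn (i ∘ u) S U :=
  ⟨hi.1.comp hu.1, fun s hs t ht h => hi.2 _ (hu.1 hs) _ (hu.1 ht) (hu.2 s hs t ht h)⟩

theorem mono_right (hi : OrderPreservingOn i S T) (hT : T ⊆ U) : OrderPreservingOn i S U :=
  ⟨hi.1.mono_right hT, hi.2⟩

theorem map_prefix (hi : OrderPreservingOn i S T) (hs : s ∈ S) (ht : t ∈ S) (hst : s <+: t) :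
    i s <+: i t := by
  rcases eq_or_ne s t with rfl | hne
  · exact List.prefix_refl _
  · exact (hi.2 s hs t ht ⟨hst, hne⟩).1

end OrderPreservingOn

namespace IsExtOrderPreserving

theorem mono_right (h : IsExtOrderPreserving i e S T C) (hT : T ⊆ U)
    (hmax : maxElems T ⊆ maxElems U) : IsExtOrderPreserving i e S U C :=
  ⟨h.1.mono_right hT, fun t ht => (h.2 t ht).imp_left (@hmax _)⟩

theorem exists_comp (h : IsExtOrderPreserving i e T U C) (hu : OrderPreservingOn u S T)
    (hT : ∀ t ∈ T, ∃ m ∈ maxElems T, t <+: m) :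
    ∃ e', IsExtOrderPreserving (i ∘ u) e' S U C := by
  choose! m hm hum using hT
  refine ⟨e ∘ m ∘ u, h.1.comp hu, fun t ht => ?_⟩
  have hut : u t ∈ T := hu.1 ht.1
  obtain ⟨he, hie, hC⟩ := h.2 _ (hm _ hut)
  exact ⟨he, (h.1.map_prefix hut (hm _ hut).1 (hum _ hut)).trans hie, hC⟩

end IsExtOrderPreserving

namespace MaxColoringRamsey

theorem of_subsingleton [Nonempty ι] (hS : (maxElems S).Subsingleton) :
    MaxColoringRamsey ι S := by
  intro C hC
  rcases (maxElems S).eq_empty_or_nonempty with hE | ⟨t, ht⟩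
  · exact ⟨Classical.arbitrary ι, id, id, .id, fun t ht => absurd ht (hE ▸ notMem_empty t)⟩
  · obtain ⟨j, hj⟩ := mem_iUnion.1 (hC ht)
    refine ⟨j, id, id, .id, fun s hs => ⟨hs, List.prefix_refl s, ?_⟩⟩
    rwa [hS hs ht]

end MaxColoringRamsey

def consTree (a : α) (S : Set (List α)) : Set (List α) :=
  {l | l = [a] ∨ ∃ t ∈ S, l = a :: t}

theorem singleton_mem_consTree (a : α) (S : Set (List α)) : [a] ∈ consTree a S := Or.inl rfl

theorem cons_mem_consTree (a : α) (ht : t ∈ S) : a :: t ∈ consTree a S := Or.inr ⟨t, ht, rfl⟩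

theorem exists_eq_cons_of_mem_consTree {a : α} (hs : s ∈ consTree a S) : ∃ t, s = a :: t := by
  rcases hs with rfl | ⟨t, -, rfl⟩
  exacts [⟨[], rfl⟩, ⟨t, rfl⟩]

theorem nil_notMem_consTree (a : α) (S : Set (List α)) : [] ∉ consTree a S := fun h => by
  obtain ⟨t, ht⟩ := exists_eq_cons_of_mem_consTree h
  cases ht

theorem consTree_empty (a : α) : consTree a ∅ = {[a]} := by
  ext l
  simp [consTree]

theorem head_eq_of_prefix_of_mem_consTree {a b : α} (hs : s ∈ consTree a S)
    (ht : t ∈ consTree b T) (hst : s <+: t) : a = b := by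
  obtain ⟨s, rfl⟩ := exists_eq_cons_of_mem_consTree hs
  obtain ⟨t, rfl⟩ := exists_eq_cons_of_mem_consTree ht
  exact (List.cons_prefix_cons.1 hst).1

theorem orderPreservingOn_cons (a : α) (S : Set (List α)) :
    OrderPreservingOn (a :: ·) S (consTree a S) :=
  ⟨fun _ ht => cons_mem_consTree a ht, fun _ _ _ _ h => properPrefix_cons_cons.2 h⟩

theorem maxElems_consTree (a : α) (hS : S.Nonempty) :
    maxElems (consTree a S) = (a :: ·) '' maxElems S := by
  ext l
  constructor
  · intro hl
    -- `[a]` is maximal only if `S = {[]}`, and then `[a] = a :: []`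
    obtain ⟨t, ht, rfl⟩ : ∃ t ∈ S, l = a :: t := by
      rcases hl.1 with rfl | h
      · obtain ⟨t, ht⟩ := hS
        refine ⟨t, ht, by_contra fun hne => hl.2 ⟨a :: t, cons_mem_consTree a ht, ?_, hne⟩⟩
        exact List.cons_prefix_cons.2 ⟨rfl, List.nil_prefix⟩
      · exact h
    exact ⟨t, ⟨ht, fun ⟨u, hu, htu⟩ =>
      hl.2 ⟨a :: u, cons_mem_consTree a hu, properPrefix_cons_cons.2 htu⟩⟩, rfl⟩
  · rintro ⟨t, ht, rfl⟩
    refine ⟨cons_mem_consTree a ht.1, fun ⟨_, hu, htu⟩ => ?_⟩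
    rcases hu with rfl | ⟨u, hu, rfl⟩
    · exact not_properPrefix_nil (properPrefix_cons_cons.1 htu)
    · exact ht.2 ⟨u, hu, properPrefix_cons_cons.1 htu⟩

theorem exists_maxElems_prefix_consTree (a : α) (hS : ∀ t ∈ S, ∃ m ∈ maxElems S, t <+: m) :
    ∀ l ∈ consTree a S, ∃ m ∈ maxElems (consTree a S), l <+: m := by
  rcases S.eq_empty_or_nonempty with rfl | hne
  · rw [consTree_empty]
    rintro l rfl
    exact ⟨[a], ⟨rfl, fun ⟨_, rfl, h⟩ => h.2 rfl⟩, List.prefix_refl _⟩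
  rw [maxElems_consTree a hne]
  obtain ⟨t₀, ht₀⟩ := hne
  rintro _ (rfl | ⟨t, ht, rfl⟩)
  · obtain ⟨m, hm, -⟩ := hS t₀ ht₀
    exact ⟨a :: m, ⟨m, hm, rfl⟩, List.cons_prefix_cons.2 ⟨rfl, List.nil_prefix⟩⟩
  · obtain ⟨m, hm, htm⟩ := hS t ht
    exact ⟨a :: m, ⟨m, hm, rfl⟩, List.cons_prefix_cons.2 ⟨rfl, htm⟩⟩

theorem IsExtOrderPreserving.cons [DecidableEq α] (a : α)
    (h : IsExtOrderPreserving i e S T ((a :: ·) ⁻¹' C)) (hS : S.Nonempty) (hS₀ : [] ∉ S)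
    (hT₀ : [] ∉ T) :
    IsExtOrderPreserving (fun l => if l = [a] then [a] else a :: i l.tail)
      (fun l => a :: e l.tail) (consTree a S) (consTree a T) C := by
  have hlift : ∀ t ∈ S, (if a :: t = [a] then [a] else a :: i t) = a :: i t := fun t ht =>
    if_neg (by simpa using ne_of_mem_of_not_mem ht hS₀)
  refine ⟨⟨?_, ?_⟩, ?_⟩
  · rintro _ (rfl | ⟨t, ht, rfl⟩)
    · simpa using singleton_mem_consTree a T
    · simp only [List.tail_cons, hlift t ht]
      exact cons_mem_consTree a (h.1.1 ht)
  · rintro _ (rfl | ⟨s, hs, rfl⟩) _ (rfl | ⟨t, ht, rfl⟩) hst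
    · exact absurd rfl hst.2
    · simp only [if_pos, List.tail_cons, hlift t ht]
      exact properPrefix_cons_cons.2 (nil_properPrefix.2 fun h' => hT₀ (h' ▸ h.1.1 ht))
    · exact absurd (properPrefix_cons_cons.1 hst) not_properPrefix_nil
    · simp only [List.tail_cons, hlift s hs, hlift t ht]
      exact properPrefix_cons_cons.2 (h.1.2 s hs t ht (properPrefix_cons_cons.1 hst))
  · have hT : T.Nonempty := hS.image i |>.mono h.1.1.image_subset
    rw [maxElems_consTree a hS, maxElems_consTree a hT]
    rintro _ ⟨t, ht, rfl⟩
    obtain ⟨he, hie, hC⟩ := h.2 t ht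
    simp only [List.tail_cons, hlift t ht.1]
    exact ⟨⟨e t, he, rfl⟩, List.cons_prefix_cons.2 ⟨rfl, hie⟩, hC⟩

theorem MaxColoringRamsey.consTree [Nonempty ι] (a : α) (h : MaxColoringRamsey ι S)
    (hS₀ : [] ∉ S) : MaxColoringRamsey ι (consTree a S) := by
  classical
  rcases S.eq_empty_or_nonempty with rfl | hne
  · rw [consTree_empty]
    exact .of_subsingleton (subsingleton_singleton.anti (maxElems_subset _))
  intro C hC
  rw [maxElems_consTree a hne, image_subset_iff, preimage_iUnion] at hC
  obtain ⟨j, i, e, hie⟩ := h _ hC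
  exact ⟨j, _, _, hie.cons a hne hS₀ hS₀⟩

section iUnion

variable {β : Type*} {S : β → Set (List α)}

def PrefixSeparated (S : β → Set (List α)) : Prop :=
  ∀ ⦃a b s t⦄, s ∈ S a → t ∈ S b → s <+: t → a = b

theorem maxElems_subset_maxElems_iUnion (hS : PrefixSeparated S) (b : β) :
    maxElems (S b) ⊆ maxElems (⋃ b, S b) := fun t ht =>
  ⟨mem_iUnion_of_mem b ht.1, fun ⟨u, hu, htu⟩ => by
    obtain ⟨b', hu⟩ := mem_iUnion.1 hu
    obtain rfl := hS ht.1 hu htu.1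
    exact ht.2 ⟨u, hu, htu⟩⟩

theorem exists_maxElems_prefix_iUnion (hS : PrefixSeparated S)
    (h : ∀ b, ∀ t ∈ S b, ∃ m ∈ maxElems (S b), t <+: m) :
    ∀ t ∈ ⋃ b, S b, ∃ m ∈ maxElems (⋃ b, S b), t <+: m := by
  intro t ht
  obtain ⟨b, ht⟩ := mem_iUnion.1 ht
  obtain ⟨m, hm, htm⟩ := h b t ht
  exact ⟨m, maxElems_subset_maxElems_iUnion hS b hm, htm⟩

open Classical in
noncomputable def glue (S : β → Set (List α)) (F : β → List α → List α) (l : List α) :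
    List α :=
  if h : ∃ b, l ∈ S b then F h.choose l else l

theorem glue_eq (hS : PrefixSeparated S) (F : β → List α → List α) {b : β} (ht : t ∈ S b) :
    glue S F t = F b t := by
  have h : ∃ b, t ∈ S b := ⟨b, ht⟩
  rw [glue, dif_pos h, hS h.choose_spec ht (List.prefix_refl t)]

theorem exists_isExtOrderPreserving_iUnion (hS : PrefixSeparated S)
    (h : ∀ b, ∃ i e, IsExtOrderPreserving i e (S b) T C) :
    ∃ i e, IsExtOrderPreserving i e (⋃ b, S b) T C := by
  choose I E hIE using h
  refine ⟨glue S I, glue S E, ⟨fun t ht => ?_, fun s hs t ht hst => ?_⟩, fun t ht => ?_⟩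
  · obtain ⟨b, ht⟩ := mem_iUnion.1 ht
    rw [glue_eq hS I ht]
    exact (hIE b).1.1 ht
  · obtain ⟨b, hs⟩ := mem_iUnion.1 hs
    obtain ⟨b', ht⟩ := mem_iUnion.1 ht
    obtain rfl := hS hs ht hst.1
    rw [glue_eq hS I hs, glue_eq hS I ht]
    exact (hIE b).1.2 s hs t ht hst
  · obtain ⟨b, htb⟩ := mem_iUnion.1 ht.1
    rw [glue_eq hS I htb, glue_eq hS E htb]
    exact (hIE b).2 t (mem_maxElems_of_subset (subset_iUnion S b) ht htb)

theorem MaxColoringRamsey.iUnion [Preorder β] [IsDirected β (· ≤ ·)] [Finite ι] [Nonempty ι]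
    (hS : PrefixSeparated S) (hemb : ∀ a b, a ≤ b → ∃ u, OrderPreservingOn u (S a) (S b))
    (hmax : ∀ b, ∀ t ∈ S b, ∃ m ∈ maxElems (S b), t <+: m)
    (h : ∀ b, MaxColoringRamsey ι (S b)) : MaxColoringRamsey ι (⋃ b, S b) := by
  intro C hC
  choose J I E hIE using fun b => h b C ((maxElems_subset_maxElems_iUnion hS b).trans hC)
  obtain ⟨j, hj⟩ := exists_isCofinal_preimage_singleton J
  choose f hfj hbf using hj
  refine ⟨j, exists_isExtOrderPreserving_iUnion hS fun b => ?_⟩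
  obtain ⟨u, hu⟩ := hemb b (f b) (hbf b)
  have hf := hIE (f b)
  rw [mem_preimage.1 (hfj b)] at hf
  obtain ⟨e, he⟩ := hf.exists_comp hu (hmax (f b))
  exact ⟨_, e, he.mono_right (subset_iUnion S (f b)) (maxElems_subset_maxElems_iUnion hS (f b))⟩

end iUnion

end PrefixTrees

theorem minTree_zero : minTree 0 = ∅ := limitRecOn_zero ..

theorem minTree_succ (ζ : Ordinal) :
    minTree (Order.succ ζ) = consTree (Order.succ ζ) (minTree ζ) :=
  limitRecOn_add_one ..

theorem minTree_limit {ξ : Ordinal} (hξ : Order.IsSuccLimit ξ) :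
    minTree ξ = ⋃ ζ : Iio ξ, minTree (Order.succ ζ.1) :=
  limitRecOn_limit _ _ _ _ hξ

theorem nil_notMem_minTree (ξ : Ordinal) : [] ∉ minTree ξ := by
  rcases zero_or_succ_or_isSuccLimit ξ with rfl | ⟨ζ, rfl⟩ | hξ
  · simp [minTree_zero]
  · rw [minTree_succ]
    exact nil_notMem_consTree _ _
  · simp only [minTree_limit hξ, minTree_succ, mem_iUnion, not_exists]
    exact fun ζ => nil_notMem_consTree _ _

theorem prefixSeparated_minTree_succ (ξ : Ordinal) :
    PrefixSeparated fun ζ : Iio ξ => minTree (Order.succ ζ.1) := by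
  intro a b s t hs ht hst
  simp only [minTree_succ] at hs ht
  exact Subtype.ext (Order.succ_injective (head_eq_of_prefix_of_mem_consTree hs ht hst))

theorem minTree_succ_subset {ζ ξ : Ordinal} (hξ : Order.IsSuccLimit ξ) (hζ : ζ < ξ) :
    minTree (Order.succ ζ) ⊆ minTree ξ := by
  rw [minTree_limit hξ]
  exact subset_iUnion (fun ζ : Iio ξ => minTree (Order.succ ζ.1)) ⟨ζ, hζ⟩

theorem exists_maxElems_prefix_minTree (ξ : Ordinal) :
    ∀ t ∈ minTree ξ, ∃ m ∈ maxElems (minTree ξ), t <+: m := by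
  induction ξ using Ordinal.limitRecOn with
  | zero => simp [minTree_zero]
  | add_one ζ ih => exact minTree_succ ζ ▸ exists_maxElems_prefix_consTree _ ih
  | limit ξ hξ ih =>
    rw [minTree_limit hξ]
    exact exists_maxElems_prefix_iUnion (prefixSeparated_minTree_succ ξ)
      fun ζ => ih _ (hξ.succ_lt ζ.2)

theorem exists_orderPreservingOn_minTree {ζ ξ : Ordinal} (h : ζ ≤ ξ) :
    ∃ u, OrderPreservingOn u (minTree ζ) (minTree ξ) := by
  induction ξ using Ordinal.limitRecOn with
  | zero => exact ⟨id, nonpos_iff_eq_zero.1 h ▸ .id⟩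
  | add_one ξ ih =>
    rcases Order.le_succ_iff_eq_or_le.1 h with rfl | h
    · exact ⟨id, .id⟩
    · obtain ⟨u, hu⟩ := ih h
      exact ⟨_, minTree_succ ξ ▸ (orderPreservingOn_cons _ _).comp hu⟩
  | limit ξ hξ ih =>
    rcases h.eq_or_lt with rfl | h
    · exact ⟨id, .id⟩
    · have hsub := minTree_succ_subset hξ h
      rw [minTree_succ] at hsub
      exact ⟨_, (orderPreservingOn_cons _ _).mono_right hsub⟩

theorem maxColoringRamsey_minTree (ι : Type*) [Finite ι] [Nonempty ι] (ξ : Ordinal) :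
    MaxColoringRamsey ι (minTree ξ) := by
  induction ξ using Ordinal.limitRecOn with
  | zero => exact .of_subsingleton (by simp [minTree_zero, maxElems])
  | add_one ζ ih => exact minTree_succ ζ ▸ ih.consTree _ (nil_notMem_minTree ζ)
  | limit ξ hξ ih =>
    rw [minTree_limit hξ]
    exact .iUnion (prefixSeparated_minTree_succ ξ)
      (fun a b hab => exists_orderPreservingOn_minTree (Order.succ_le_succ hab))
      (fun ζ => exists_maxElems_prefix_minTree _) fun ζ => ih _ (hξ.succ_lt ζ.2)

theorem minTree_max_coloring_general (ξ : Ordinal)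
    (C : Fin 2 → Set (List Ordinal))
    (hC : maxElems (minTree ξ) = C 0 ∪ C 1) :
    ∃ (j : Fin 2) (i e : List Ordinal → List Ordinal),
      (∀ t ∈ minTree ξ, i t ∈ minTree ξ) ∧
      (∀ s ∈ minTree ξ, ∀ t ∈ minTree ξ, ProperPrefix s t → ProperPrefix (i s) (i t)) ∧
      (∀ t ∈ maxElems (minTree ξ),
        e t ∈ maxElems (minTree ξ) ∧ i t <+: e t ∧ e t ∈ C j) := by
  obtain ⟨j, i, e, ⟨hmaps, hmono⟩, he⟩ := maxColoringRamsey_minTree (Fin 2) ξ C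
    (hC.le.trans (union_subset (subset_iUnion C 0) (subset_iUnion C 1)))
  exact ⟨j, i, e, fun t ht => hmaps ht, hmono, he⟩

/-- If the maximal elements of `𝒯_ξ` (`ξ ≥ 1`) are covered by two colors, then there
is an extended order preserving map `(i, e)` of `𝒯_ξ` into itself with
`e(MAX(𝒯_ξ))` monochromatic. -/
theorem minTree_max_coloring (ξ : Ordinal) (hξ : 1 ≤ ξ)
    (C : Fin 2 → Set (List Ordinal))
    (hC : maxElems (minTree ξ) = C 0 ∪ C 1) :
    ∃ (j : Fin 2) (i e : List Ordinal → List Ordinal),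
      (∀ t ∈ minTree ξ, i t ∈ minTree ξ) ∧
      (∀ s ∈ minTree ξ, ∀ t ∈ minTree ξ, ProperPrefix s t → ProperPrefix (i s) (i t)) ∧
      (∀ t ∈ maxElems (minTree ξ),
        e t ∈ maxElems (minTree ξ) ∧ i t <+: e t ∧ e t ∈ C j) :=
  minTree_max_coloring_general ξ C hC
end

section
/- Let X be a Banach space and (x_i)_{i=1}^n vectors with ‖x_i‖ ≥ 1 for all i, and let ε ∈ [0,1). If ‖Σ_{i=1}^n a_i x_i‖ ≤ (1+ε) max_i |a_i| for all scalars (a_i), then ‖Σ_{i=1}^n a_i x_i‖ ≥ (1−ε) max_i |a_i| for all scalars (a_i); hence ((1+ε)^{-1} x_i)_{i=1}^n is (1+ε)(1−ε)^{-1}-equivalent to the unit vector basis of ℓ_∞^n. -/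
/-!
Let `|a_j|` be the largest coefficient and reflect the signs of all the other coefficients:
`w = ∑ a_i x_i` and `w' = a_j x_j - ∑_{i ≠ j} a_i x_i` add up to `2 a_j x_j`, and `w'` has the
same coefficient bound as `w`. Hence `2 |a_j| ≤ ‖w‖ + ‖w'‖ ≤ ‖w‖ + (1 + ε) |a_j|`, which is
the lower estimate `(1 - ε) |a_j| ≤ ‖w‖`. Rescaling by `(1 + ε)⁻¹` gives the `ℓ∞^n` equivalence.
-/

section

variable {ι X : Type*} [Fintype ι] [NormedAddCommGroup X] [NormedSpace ℝ X]

lemma sum_smul_add_sum_update_neg_smul [DecidableEq ι] (a : ι → ℝ) (x : ι → X) (j : ι) :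
    ∑ i, a i • x i + ∑ i, Function.update (-a) j (a j) i • x i = (2 * a j) • x j := by
  rw [← Finset.sum_add_distrib, Finset.sum_eq_single j]
  · simp only [Function.update_self, two_mul, add_smul]
  · intro k _ hk
    simp [Function.update_of_ne hk]
  · simp

lemma two_mul_abs_le_norm_sum_add_norm_sum_update_neg [DecidableEq ι] {x : ι → X}
    (a : ι → ℝ) (j : ι) (hxj : 1 ≤ ‖x j‖) :
    2 * |a j| ≤ ‖∑ i, a i • x i‖ + ‖∑ i, Function.update (-a) j (a j) i • x i‖ :=
  calc 2 * |a j| ≤ 2 * |a j| * ‖x j‖ := le_mul_of_one_le_right (by positivity) hxj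
    _ = ‖(2 * a j) • x j‖ := by rw [norm_smul, Real.norm_eq_abs, abs_mul, abs_two]
    _ ≤ _ := by rw [← sum_smul_add_sum_update_neg_smul]; exact norm_add_le _ _

theorem sub_mul_abs_le_norm_sum_smul {x : ι → X} (hx : ∀ i, 1 ≤ ‖x i‖) {C : ℝ} (hC : C ≤ 2)
    (hupper : ∀ (a : ι → ℝ) (M : ℝ), 0 ≤ M → (∀ i, |a i| ≤ M) → ‖∑ i, a i • x i‖ ≤ C * M)
    (a : ι → ℝ) (i : ι) : (2 - C) * |a i| ≤ ‖∑ j, a j • x j‖ := by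
  classical
  have : Nonempty ι := ⟨i⟩
  obtain ⟨j, hj⟩ := Finite.exists_max fun k => |a k|
  have hreflect : ∀ k, |Function.update (-a) j (a j) k| ≤ |a j| := fun k => by
    rcases eq_or_ne k j with rfl | hk
    · simp
    · simpa [Function.update_of_ne hk] using hj k
  have htwo := two_mul_abs_le_norm_sum_add_norm_sum_update_neg a j (hx j)
  have hw' := hupper _ _ (abs_nonneg _) hreflect
  calc (2 - C) * |a i| ≤ (2 - C) * |a j| := mul_le_mul_of_nonneg_left (hj i) (by linarith)
    _ ≤ ‖∑ j, a j • x j‖ := by linarith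

end

theorem james_c0_lower_estimate_general {X : Type*} [NormedAddCommGroup X] [NormedSpace ℝ X]
    (n : ℕ) (x : Fin n → X) (hx : ∀ i, 1 ≤ ‖x i‖)
    (ε : ℝ) (hε0 : 0 ≤ ε) (hε1 : ε < 1)
    (hupper : ∀ (a : Fin n → ℝ) (M : ℝ), 0 ≤ M → (∀ i, |a i| ≤ M) →
      ‖∑ i, a i • x i‖ ≤ (1 + ε) * M) :
    (∀ (a : Fin n → ℝ) (i : Fin n), (1 - ε) * |a i| ≤ ‖∑ j, a j • x j‖) ∧
    (∀ (a : Fin n → ℝ) (M : ℝ), 0 ≤ M → (∀ i, |a i| ≤ M) →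
      ‖∑ i, a i • ((1 + ε)⁻¹ • x i)‖ ≤ M) ∧
    (∀ (a : Fin n → ℝ) (i : Fin n),
      ((1 - ε) / (1 + ε)) * |a i| ≤ ‖∑ j, a j • ((1 + ε)⁻¹ • x j)‖) := by
  have hpos : 0 < 1 + ε := by linarith
  have hlower (a : Fin n → ℝ) (i : Fin n) : (1 - ε) * |a i| ≤ ‖∑ j, a j • x j‖ := by
    convert sub_mul_abs_le_norm_sum_smul hx (by linarith) hupper a i using 2
    ring
  have hscaled (a : Fin n → ℝ) :
      ‖∑ i, a i • ((1 + ε)⁻¹ • x i)‖ = ‖∑ i, a i • x i‖ / (1 + ε) := by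
    simp only [smul_comm _ (1 + ε)⁻¹, ← Finset.smul_sum, norm_smul, Real.norm_eq_abs,
      abs_of_pos (inv_pos.mpr hpos), inv_mul_eq_div]
  refine ⟨hlower, fun a M hM haM => ?_, fun a i => ?_⟩
  · rw [hscaled, div_le_iff₀' hpos]
    exact hupper a M hM haM
  · rw [hscaled, div_mul_eq_mul_div]
    exact div_le_div_of_nonneg_right (hlower a i) hpos.le

/-- James's argument for `c₀` lower estimates: if `‖x_i‖ ≥ 1` for all `i` and
`‖∑ a_i x_i‖ ≤ (1+ε) max |a_i|` for all scalars, with `0 ≤ ε < 1`, then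
`‖∑ a_i x_i‖ ≥ (1−ε) max |a_i|`; hence `((1+ε)⁻¹ x_i)` is
`(1+ε)(1−ε)⁻¹`-equivalent to the `ℓ∞^n` unit vector basis. -/
theorem james_c0_lower_estimate {X : Type*} [NormedAddCommGroup X] [NormedSpace ℝ X]
    [CompleteSpace X] (n : ℕ) (x : Fin n → X) (hx : ∀ i, 1 ≤ ‖x i‖)
    (ε : ℝ) (hε0 : 0 ≤ ε) (hε1 : ε < 1)
    (hupper : ∀ (a : Fin n → ℝ) (M : ℝ), 0 ≤ M → (∀ i, |a i| ≤ M) →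
      ‖∑ i, a i • x i‖ ≤ (1 + ε) * M) :
    (∀ (a : Fin n → ℝ) (i : Fin n), (1 - ε) * |a i| ≤ ‖∑ j, a j • x j‖) ∧
    (∀ (a : Fin n → ℝ) (M : ℝ), 0 ≤ M → (∀ i, |a i| ≤ M) →
      ‖∑ i, a i • ((1 + ε)⁻¹ • x i)‖ ≤ M) ∧
    (∀ (a : Fin n → ℝ) (i : Fin n),
      ((1 - ε) / (1 + ε)) * |a i| ≤ ‖∑ j, a j • ((1 + ε)⁻¹ • x j)‖) :=
  james_c0_lower_estimate_general n x hx ε hε0 hε1 hupper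
end
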